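/- The standard control vector field equals the contraction of the tensor T with g; explicitly, v₀ = Σ_{i,j=1}^k (−1)^{i+j+1} M_{ij} ⟪g, f_i⟫ · f_j + (det Γ_f) · g. -/

import Mathlib

open scoped RealInnerProductSpace

/-- The matrix `Σ^{(a₁,…,a_r)}_{(b₁,…,b_s)}` whose `(p,q)` entry is `⟪b_q, a_p⟫`. -/
noncomputable def sigmaMat {V : Type*} [NormedAddCommGroup V] [InnerProductSpace ℝ V]
    {r s : ℕ} (a : Fin r → V) (b : Fin s → V) : Matrix (Fin r) (Fin s) ℝ :=
  Matrix.of fun p q => ⟪b q, a p⟫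

/-- The standard control vector field built from the `k+1` vectors `f₀,…,f_k`
and the vector `g`. -/
noncomputable def v0 {V : Type*} [NormedAddCommGroup V] [InnerProductSpace ℝ V]
    {k : ℕ} (f : Fin (k+1) → V) (g : V) : V :=
  (∑ i : Fin (k+1),
    ((-1 : ℝ) ^ ((i : ℕ) + k + 1) *
      (sigmaMat f (Fin.snoc (fun j => f (i.succAbove j)) g)).det) • f i)
  + (sigmaMat f f).det • g

/-- `M_{ij}`: the determinant of the matrix obtained from the Gram matrix of `f`
by deleting the `i`-th row and the `j`-th column. -/
noncomputable def gramMinor {V : Type*} [NormedAddCommGroup V] [InnerProductSpace ℝ V]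
    {k : ℕ} (f : Fin (k+1) → V) (i j : Fin (k+1)) : ℝ :=
  ((sigmaMat f f).submatrix i.succAbove j.succAbove).det

section
variable {V : Type*} [NormedAddCommGroup V] [InnerProductSpace ℝ V]

lemma det_sigmaMat_snoc {k : ℕ} (a : Fin (k+1) → V) (b : Fin k → V) (g : V) :
    (sigmaMat a (Fin.snoc b g)).det =
      ∑ p : Fin (k+1),
        (-1 : ℝ) ^ ((p : ℕ) + k) * ⟪g, a p⟫ * (sigmaMat (a ∘ p.succAbove) b).det := by
  rw [Matrix.det_succ_column _ (Fin.last k)]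
  refine Finset.sum_congr rfl fun p _ => ?_
  congr 2
  · simp [sigmaMat]
  · ext x y
    simp [sigmaMat, Fin.succAbove_last]

lemma det_sigmaMat_snoc_succAbove {k : ℕ} (f : Fin (k+1) → V) (g : V) (i : Fin (k+1)) :
    (sigmaMat f (Fin.snoc (fun j => f (i.succAbove j)) g)).det =
      ∑ p : Fin (k+1), (-1 : ℝ) ^ ((p : ℕ) + k) * ⟪g, f p⟫ * gramMinor f p i :=
  det_sigmaMat_snoc f _ g

end

lemma neg_one_pow_add_add_one_mul_neg_one_pow_add {R : Type*} [Monoid R] [HasDistribNeg R]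
    (a b k : ℕ) : (-1 : R) ^ (a + k + 1) * (-1) ^ (b + k) = (-1) ^ (b + a + 1) := by
  rw [← pow_add, show a + k + 1 + (b + k) = b + a + 1 + 2 * k by ring, pow_add, pow_mul]
  simp

theorem stmt_7_general {V : Type*} [NormedAddCommGroup V] [InnerProductSpace ℝ V]
    (k : ℕ) (f : Fin (k+1) → V) (g : V) :
    v0 f g =
      (∑ i : Fin (k+1), ∑ j : Fin (k+1),
        ((-1 : ℝ) ^ ((i : ℕ) + (j : ℕ) + 1) * gramMinor f i j * ⟪g, f i⟫) • f j)
      + (sigmaMat f f).det • g := by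
  rw [v0, Finset.sum_comm]
  congr 1
  refine Finset.sum_congr rfl fun j _ => ?_
  rw [det_sigmaMat_snoc_succAbove, Finset.mul_sum, Finset.sum_smul]
  refine Finset.sum_congr rfl fun i _ => ?_
  rw [← neg_one_pow_add_add_one_mul_neg_one_pow_add (j : ℕ) i k]
  ring_nf

theorem stmt_7 {V : Type*} [NormedAddCommGroup V] [InnerProductSpace ℝ V]
    [FiniteDimensional ℝ V] (k : ℕ) (f : Fin (k+1) → V) (g : V) :
    v0 f g =
      (∑ i : Fin (k+1), ∑ j : Fin (k+1),
        ((-1 : ℝ) ^ ((i : ℕ) + (j : ℕ) + 1) * gramMinor f i j * ⟪g, f i⟫) • f j)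
      + (sigmaMat f f).det • g :=
  stmt_7_general k f g
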